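/- Let n ≥ 4 and let H be a Hamiltonian cycle of the complete bipartite graph K_{n,n}. Then the graph G = K_{n,n} − H (the complete bipartite graph with the edges of H removed, i.e. the bipartite complement of the cycle C_{2n}) is 2-swappable. -/

import Mathlib

open SimpleGraph
open scoped Classical

/-- A finite simple graph `G` is 2-swappable if for every edge `e` of `G` there exist a set
`A` of edges of `G` with `e ∈ A` and `|A| ≤ 2`, and a set `B` of edges of the complement of
`G`, such that deleting the edges in `A` and adding the edges in `B` yields a graph
isomorphic to `G`. -/
def TwoSwappable {V : Type} (G : SimpleGraph V) : Prop :=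
  ∀ e ∈ G.edgeSet, ∃ A B : Set (Sym2 V),
    e ∈ A ∧ A ⊆ G.edgeSet ∧ A.ncard ≤ 2 ∧ B ⊆ Gᶜ.edgeSet ∧
    Nonempty ((G.deleteEdges A ⊔ SimpleGraph.fromEdgeSet B) ≃g G)

/-!
Number the vertices along the Hamiltonian cycle by `ZMod (2n)`. Then `K_{n,n}` becomes the graph
joining residues of different parity and `H` becomes the cycle `k — k + 1`, so the graph is the
parity graph minus that cycle. Given an edge `ij` of it, delete `ij` and `(i+1)(j+1)` and add the
cycle edges `i(i+1)` and `j(j+1)`: this replaces the cycle by the one obtained from it by a 2-opt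
move, and reversing the arc `i + 1, …, j` carries the old cycle onto the new one. Since `i` and `j`
have different parities, that reversal `u ↦ i + j + 1 - u` preserves parities, so it is an
isomorphism between the two complements.
-/

theorem TwoSwappable.of_iso {V W : Type} {G : SimpleGraph V} {G' : SimpleGraph W} (φ : G ≃g G')
    (h : TwoSwappable G) : TwoSwappable G' := by
  have hinj : Function.Injective (Sym2.map φ) := Sym2.map.injective φ.injective
  have hmem (S : Set (Sym2 V)) (u v : V) : s(φ u, φ v) ∈ Sym2.map φ '' S ↔ s(u, v) ∈ S := by
    rw [← Sym2.map_mk, hinj.mem_set_image]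
  intro e' he'
  obtain ⟨e, rfl⟩ : ∃ e, Sym2.map φ e = e' := ⟨Sym2.map φ.symm e', by simp [Sym2.map_map]⟩
  obtain ⟨A, B, heA, hAG, hcard, hBG, ⟨ψ⟩⟩ := h e (φ.map_mem_edgeSet_iff.1 he')
  refine ⟨Sym2.map φ '' A, Sym2.map φ '' B, Set.mem_image_of_mem _ heA, ?_, ?_, ?_, ⟨?_⟩⟩
  · rintro _ ⟨f, hf, rfl⟩
    exact φ.map_mem_edgeSet_iff.2 (hAG hf)
  · rwa [Set.ncard_image_of_injective _ hinj]
  · rintro _ ⟨f, hf, rfl⟩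
    induction f with
    | _ u v => simpa [φ.map_adj_iff] using hBG hf
  · have hcomap : (G'.deleteEdges (Sym2.map φ '' A) ⊔ fromEdgeSet (Sym2.map φ '' B)).comap φ =
        G.deleteEdges A ⊔ fromEdgeSet B := by
      ext u v
      simp [hmem, φ.map_adj_iff]
    exact ((Iso.comap φ.toEquiv _).symm.trans (hcomap ▸ Iso.refl)).trans (ψ.trans φ)

namespace SimpleGraph

def Iso.sdiff {V W : Type*} {G H : SimpleGraph V} {G' H' : SimpleGraph W} (f : V ≃ W)
    (hG : ∀ u v, G'.Adj (f u) (f v) ↔ G.Adj u v) (hH : ∀ u v, H'.Adj (f u) (f v) ↔ H.Adj u v) :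
    G \ H ≃g G' \ H' :=
  ⟨f, fun {u v} => by simp only [sdiff_adj, hG, hH]⟩

lemma sdiff_deleteEdges_sup_fromEdgeSet {V : Type*} {K C : SimpleGraph V} {A B : Set (Sym2 V)}
    (hCK : C ≤ K) (hA : A ⊆ (K \ C).edgeSet) (hB : B ⊆ C.edgeSet) :
    (K \ C).deleteEdges A ⊔ fromEdgeSet B = K \ (C.deleteEdges B ⊔ fromEdgeSet A) := by
  ext u v
  have hA' := @hA s(u, v)
  have hB' := @hB s(u, v)
  have hCK' := @hCK u v
  simp only [sup_adj, sdiff_adj, deleteEdges_adj, fromEdgeSet_adj, mem_edgeSet] at hA' hB' ⊢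
  by_cases huv : u = v
  · simp [huv]
  tauto

lemma circulantGraph_singleton_adj_iff {G : Type*} [AddCommGroup G] {d : G} (hd : d ≠ 0)
    {u v : G} : (circulantGraph {d}).Adj u v ↔ ∃ c, s(c, c + d) = s(u, v) := by
  simp only [circulantGraph_adj, Set.mem_singleton_iff, Sym2.eq_iff, sub_eq_iff_eq_add']
  constructor
  · rintro ⟨-, h | h⟩
    exacts [⟨v, .inr ⟨rfl, h.symm⟩⟩, ⟨u, .inl ⟨rfl, h.symm⟩⟩]
  · rintro ⟨c, ⟨rfl, rfl⟩ | ⟨rfl, rfl⟩⟩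
    · exact ⟨by simpa using hd, .inr rfl⟩
    · exact ⟨by simpa using hd, .inl rfl⟩

lemma completeBipartiteGraph_adj_iff_isRight_ne {α β : Type*} {x y : α ⊕ β} :
    (completeBipartiteGraph α β).Adj x y ↔ x.isRight ≠ y.isRight := by
  cases x <;> cases y <;> simp

lemma Walk.completeBipartiteGraph_adj_getVert_iff {α β : Type*} {a b : α ⊕ β}
    (p : (completeBipartiteGraph α β).Walk a b) {i j : ℕ} (hi : i ≤ p.length)
    (hj : j ≤ p.length) :
    (completeBipartiteGraph α β).Adj (p.getVert i) (p.getVert j) ↔ ¬(Even i ↔ Even j) := by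
  have parity {k : ℕ} (hk : k ≤ p.length) : Even k ↔ (a.isRight ↔ (p.getVert k).isRight) := by
    have := (CompleteBipartiteGraph.bicoloring α β).even_length_iff_congr (p.take k)
    rwa [Walk.take_length, min_eq_left hk] at this
  rw [completeBipartiteGraph_adj_iff_isRight_ne, parity hi, parity hj]
  cases a.isRight <;> cases (p.getVert i).isRight <;> cases (p.getVert j).isRight <;> simp

namespace Walk.IsHamiltonianCycle

variable {V : Type*} [Fintype V] [DecidableEq V] {G : SimpleGraph V} {a : V} {p : G.Walk a a}

lemma three_le_card (hp : p.IsHamiltonianCycle) : 3 ≤ Fintype.card V :=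
  hp.length_eq ▸ hp.isCycle.three_le_length

lemma getVert_val_natCast (hp : p.IsHamiltonianCycle) {i : ℕ} (hi : i ≤ p.length) :
    p.getVert ((i : ZMod (Fintype.card V)).val) = p.getVert i := by
  rw [hp.length_eq] at hi
  rcases hi.lt_or_eq with hi | rfl
  · rw [ZMod.val_cast_of_lt hi]
  · rw [ZMod.natCast_self, ZMod.val_zero, Walk.getVert_zero, ← hp.length_eq, Walk.getVert_length]

lemma getVert_val_bijective (hp : p.IsHamiltonianCycle) :
    Function.Bijective fun k : ZMod (Fintype.card V) => p.getVert k.val := by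
  have : NeZero (Fintype.card V) := NeZero.of_pos (by linarith [hp.three_le_card])
  refine (Fintype.bijective_iff_injective_and_card _).2 ⟨fun k l hkl => ?_, ZMod.card _⟩
  have hlt (k : ZMod (Fintype.card V)) : k.val ≤ p.length - 1 := by
    have := k.val_lt
    rw [hp.length_eq]
    omega
  exact ZMod.val_injective _ (hp.isCycle.getVert_injOn' (hlt k) (hlt l) hkl)

lemma fromEdgeSet_edges_adj_getVert_val_iff (hp : p.IsHamiltonianCycle)
    (k l : ZMod (Fintype.card V)) :
    (fromEdgeSet {e | e ∈ p.edges}).Adj (p.getVert k.val) (p.getVert l.val) ↔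
      (circulantGraph {1}).Adj k l := by
  have : Fact (1 < Fintype.card V) := ⟨by linarith [hp.three_le_card]⟩
  have hinj := Sym2.map.injective hp.getVert_val_bijective.injective
  have hstep {i : ℕ} (hi : i < p.length) : s(p.getVert i, p.getVert (i + 1)) =
      Sym2.map (fun k : ZMod (Fintype.card V) => p.getVert k.val)
        s((i : ZMod _), (i : ZMod _) + 1) := by
    rw [Sym2.map_mk, ← Nat.cast_succ, hp.getVert_val_natCast hi.le, hp.getVert_val_natCast hi]
  rw [fromEdgeSet_adj, Set.mem_ofPred_eq, Walk.mk_mem_edges_iff_exists,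
    circulantGraph_singleton_adj_iff one_ne_zero]
  constructor
  · rintro ⟨⟨i, hi, h⟩, -⟩
    rw [hstep hi, ← Sym2.map_mk] at h
    exact ⟨i, hinj h⟩
  · rintro ⟨c, h⟩
    have hc : c.val < p.length := by
      rw [hp.length_eq]
      exact c.val_lt
    refine ⟨⟨c.val, hc, ?_⟩, ?_⟩
    · rw [hstep hc, ZMod.natCast_zmod_val, h, Sym2.map_mk]
    · have hkl : ¬s(k, l).IsDiag := h ▸ by simp
      exact fun h' => hkl (Sym2.mk_isDiag_iff.2 (hp.getVert_val_bijective.injective h'))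

end Walk.IsHamiltonianCycle

/-- Adjacency in the cycle `0 — 1 — ⋯ — (N - 1) — 0`. -/
def cycleAdj (N a b : ℕ) : Prop :=
  b = a + 1 ∨ a = b + 1 ∨ (a + 1 = N ∧ b = 0) ∨ (b + 1 = N ∧ a = 0)

lemma cycleAdj_reflect_iff {N m : ℕ} (hm : 2 ≤ m) (hmN : m + 2 ≤ N) (a b : ℕ) :
    cycleAdj N (if 1 ≤ a ∧ a ≤ m then m + 1 - a else a)
        (if 1 ≤ b ∧ b ≤ m then m + 1 - b else b) ↔
      (cycleAdj N a b ∧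
          ¬((a = 0 ∧ b = 1 ∨ a = 1 ∧ b = 0) ∨ (a = m ∧ b = m + 1 ∨ a = m + 1 ∧ b = m))) ∨
        ((a = 0 ∧ b = m ∨ a = m ∧ b = 0) ∨ (a = 1 ∧ b = m + 1 ∨ a = m + 1 ∧ b = 1)) ∧
          ¬a = b := by
  unfold cycleAdj
  split_ifs <;> lia

variable {N : ℕ}

lemma _root_.ZMod.eq_add_one_iff_val [Fact (1 < N)] {a b : ZMod N} :
    a = b + 1 ↔ a.val = b.val + 1 ∨ (b.val + 1 = N ∧ a.val = 0) := by
  rw [← (ZMod.val_injective N).eq_iff, ZMod.val_add, ZMod.val_one]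
  have ha := a.val_lt
  rcases (show b.val + 1 < N ∨ b.val + 1 = N by have := b.val_lt; omega) with h | h
  · rw [Nat.mod_eq_of_lt h]
    omega
  · rw [h, Nat.mod_self]
    omega

lemma _root_.ZMod.eq_iff_val_sub_eq [NeZero N] (i u v : ZMod N) :
    u = v ↔ (u - i).val = (v - i).val :=
  ⟨fun h => h ▸ rfl, fun h => sub_left_inj.1 (ZMod.val_injective N h)⟩

lemma circulantGraph_one_adj_iff_cycleAdj [Fact (1 < N)] (i u v : ZMod N) :
    (circulantGraph {1}).Adj u v ↔ cycleAdj N (u - i).val (v - i).val := by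
  rw [← circulantGraph_adj_translate (d := -i), ← sub_eq_add_neg, ← sub_eq_add_neg,
    circulantGraph_singleton_adj_iff one_ne_zero]
  simp only [Sym2.eq_iff]
  have : (∃ c : ZMod N, c = u - i ∧ c + 1 = v - i ∨ c = v - i ∧ c + 1 = u - i) ↔
      v - i = u - i + 1 ∨ u - i = v - i + 1 := by
    constructor
    · rintro ⟨c, ⟨rfl, h⟩ | ⟨rfl, h⟩⟩
      exacts [.inl h.symm, .inr h.symm]
    · rintro (h | h)
      exacts [⟨_, .inl ⟨rfl, h.symm⟩⟩, ⟨_, .inr ⟨rfl, h.symm⟩⟩]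
  rw [this, ZMod.eq_add_one_iff_val, ZMod.eq_add_one_iff_val, cycleAdj]
  omega

/-- The involution of `ZMod N` reversing the arc `i + 1, …, j` of the cycle `circulantGraph {1}`. -/
def reverseArc (i j u : ZMod N) : ZMod N :=
  if 1 ≤ (u - i).val ∧ (u - i).val ≤ (j - i).val then i + j + 1 - u else u

lemma val_reverseArc_sub [NeZero N] (i j u : ZMod N) :
    (reverseArc i j u - i).val =
      if 1 ≤ (u - i).val ∧ (u - i).val ≤ (j - i).val then (j - i).val + 1 - (u - i).val
      else (u - i).val := by
  unfold reverseArc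
  split_ifs with h
  · have : i + j + 1 - u - i = (((j - i).val + 1 - (u - i).val : ℕ) : ZMod N) := by
      rw [Nat.cast_sub (by omega), Nat.cast_add, ZMod.natCast_zmod_val, ZMod.natCast_zmod_val,
        Nat.cast_one]
      ring
    rw [this, ZMod.val_cast_of_lt (by have := (j - i).val_lt; omega)]
  · rfl

lemma reverseArc_involutive [NeZero N] (i j : ZMod N) : Function.Involutive (reverseArc i j) := by
  intro u
  rw [ZMod.eq_iff_val_sub_eq i, val_reverseArc_sub, val_reverseArc_sub]
  split_ifs <;> omega

lemma castHom_reverseArc (hN : 2 ∣ N) {i j : ZMod N}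
    (hij : ZMod.castHom hN (ZMod 2) i ≠ ZMod.castHom hN (ZMod 2) j) (u : ZMod N) :
    ZMod.castHom hN (ZMod 2) (reverseArc i j u) = ZMod.castHom hN (ZMod 2) u := by
  have key : ∀ x y z : ZMod 2, x ≠ y → x + y + 1 - z = z := by decide
  unfold reverseArc
  split_ifs
  · rw [map_sub, map_add, map_add, map_one]
    exact key _ _ _ hij
  · rfl

lemma circulantGraph_one_adj_reverseArc [Fact (1 < N)] {i j : ZMod N} (hj : 2 ≤ (j - i).val)
    (hjN : (j - i).val + 2 ≤ N) (u v : ZMod N) :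
    (circulantGraph {1}).Adj (reverseArc i j u) (reverseArc i j v) ↔
      ((circulantGraph {1}).deleteEdges {s(i, i + 1), s(j, j + 1)} ⊔
        fromEdgeSet {s(i, j), s(i + 1, j + 1)}).Adj u v := by
  have h0 : (i - i).val = 0 := by simp
  have h1 : (i + 1 - i).val = 1 := by simp [ZMod.val_one]
  have hj1 : (j + 1 - i).val = (j - i).val + 1 := by
    rw [add_sub_right_comm, ZMod.val_add, ZMod.val_one, Nat.mod_eq_of_lt (by omega)]
  simp only [sup_adj, deleteEdges_adj, fromEdgeSet_adj, Set.mem_insert_iff, Set.mem_singleton_iff,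
    Sym2.eq_iff, ne_eq, circulantGraph_one_adj_iff_cycleAdj i, val_reverseArc_sub,
    ZMod.eq_iff_val_sub_eq i u, ZMod.eq_iff_val_sub_eq i v, h0, h1, hj1]
  exact cycleAdj_reflect_iff hj hjN _ _

/-- The complete bipartite graph on `ZMod N` whose parts are the even and the odd residues. -/
def parityGraph (hN : 2 ∣ N) : SimpleGraph (ZMod N) :=
  (⊤ : SimpleGraph (ZMod 2)).comap (ZMod.castHom hN (ZMod 2))

lemma parityGraph_adj {hN : 2 ∣ N} {u v : ZMod N} :
    (parityGraph hN).Adj u v ↔ ZMod.castHom hN (ZMod 2) u ≠ ZMod.castHom hN (ZMod 2) v :=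
  Iff.rfl

lemma parityGraph_adj_iff_even [NeZero N] {hN : 2 ∣ N} {u v : ZMod N} :
    (parityGraph hN).Adj u v ↔ ¬(Even u.val ↔ Even v.val) := by
  rw [parityGraph_adj, ZMod.castHom_apply, ZMod.castHom_apply, ZMod.cast_eq_val, ZMod.cast_eq_val,
    ne_eq, ZMod.natCast_eq_natCast_iff', Nat.even_iff, Nat.even_iff]
  omega

lemma circulantGraph_one_le_parityGraph (hN : 2 ∣ N) : circulantGraph {1} ≤ parityGraph hN := by
  have key : ∀ x y : ZMod 2, x - y = 1 → x ≠ y := by decide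
  rintro u v ⟨-, h | h⟩ <;> rw [Set.mem_singleton_iff] at h
  · exact key _ _ (by rw [← map_sub, h, map_one])
  · exact (key _ _ (by rw [← map_sub, h, map_one])).symm

theorem twoSwappable_parityGraph_sdiff_circulantGraph [Fact (1 < N)] (hN : 2 ∣ N) :
    TwoSwappable (parityGraph hN \ circulantGraph {1}) := by
  intro e hij
  induction e with | _ i j => ?_
  have hj : 2 ≤ (j - i).val ∧ (j - i).val + 2 ≤ N := by
    obtain ⟨hπ, hC⟩ := hij
    rw [circulantGraph_one_adj_iff_cycleAdj i] at hC
    have hj0 : (j - i).val ≠ 0 := fun h =>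
      hπ (by rw [(ZMod.eq_iff_val_sub_eq i i j).2 (by simp [h])])
    have := (j - i).val_lt
    simp only [cycleAdj, sub_self, ZMod.val_zero, and_true] at hC
    omega
  have hA : {s(i, j), s(i + 1, j + 1)} ⊆ (parityGraph hN \ circulantGraph {1}).edgeSet := by
    rintro _ (rfl | rfl)
    exacts [hij, by simpa only [mem_edgeSet, sdiff_adj, parityGraph_adj, map_add, map_one, ne_eq,
      add_left_inj, circulantGraph_adj_translate] using hij]
  have hB : {s(i, i + 1), s(j, j + 1)} ⊆ (circulantGraph {1} : SimpleGraph (ZMod N)).edgeSet := by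
    rintro _ (rfl | rfl) <;> exact (circulantGraph_singleton_adj_iff one_ne_zero).2 ⟨_, rfl⟩
  refine ⟨_, {s(i, i + 1), s(j, j + 1)}, Set.mem_insert _ _, hA,
    (Set.ncard_insert_le _ _).trans (by rw [Set.ncard_singleton]), ?_, ?_⟩
  · intro e he
    induction e with
    | _ u v =>
      have huv : (circulantGraph {1}).Adj u v := hB he
      exact ⟨huv.ne, fun h => h.2 huv⟩
  · rw [sdiff_deleteEdges_sup_fromEdgeSet (circulantGraph_one_le_parityGraph hN) hA hB]
    exact ⟨Iso.sdiff (reverseArc_involutive i j).toPerm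
      (fun u v => by simp [parityGraph_adj, castHom_reverseArc hN hij.1])
      (circulantGraph_one_adj_reverseArc hj.1 hj.2)⟩

end SimpleGraph

theorem stmt_5_general (n : ℕ) (a : Fin n ⊕ Fin n)
    (p : (completeBipartiteGraph (Fin n) (Fin n)).Walk a a)
    (hp : p.IsHamiltonianCycle) :
    TwoSwappable (completeBipartiteGraph (Fin n) (Fin n) \
      SimpleGraph.fromEdgeSet {e | e ∈ p.edges}) := by
  have hN : 2 ∣ Fintype.card (Fin n ⊕ Fin n) := ⟨n, by simp [two_mul]⟩
  have : Fact (1 < Fintype.card (Fin n ⊕ Fin n)) := ⟨by linarith [hp.three_le_card]⟩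
  have hval (k : ZMod (Fintype.card (Fin n ⊕ Fin n))) : k.val ≤ p.length := by
    rw [hp.length_eq]
    exact k.val_lt.le
  refine (twoSwappable_parityGraph_sdiff_circulantGraph hN).of_iso
    (Iso.sdiff (Equiv.ofBijective _ hp.getVert_val_bijective) (fun k l => ?_)
      hp.fromEdgeSet_edges_adj_getVert_val_iff)
  rw [Equiv.ofBijective_apply, Equiv.ofBijective_apply,
    p.completeBipartiteGraph_adj_getVert_iff (hval k) (hval l), parityGraph_adj_iff_even]

/-- If `n ≥ 4` and `H` is a Hamiltonian cycle of the complete bipartite graph `K_{n,n}`,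
then `K_{n,n} - H` is 2-swappable. -/
theorem stmt_5 (n : ℕ) (hn : 4 ≤ n) (a : Fin n ⊕ Fin n)
    (p : (completeBipartiteGraph (Fin n) (Fin n)).Walk a a)
    (hp : p.IsHamiltonianCycle) :
    TwoSwappable (completeBipartiteGraph (Fin n) (Fin n) \
      SimpleGraph.fromEdgeSet {e | e ∈ p.edges}) :=
  stmt_5_general n a p hp
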